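/- Let k > 2 be an integer and let Q be the real polynomial of degree 2 that is extremal for (2, {1,2,...,k}). Then for all real x: Q(((k−1)/2)x + (k+1)/2) = T_2(x) when k is odd, and Q(((k−1)/2)x + (k+1)/2) = T_2(x) + (2/(k(k−2)))·(x^2 − 1) when k is even, where T_2(x) = 2x^2 − 1 is the degree 2 Chebyshev polynomial of the first kind. -/

import Mathlib

/-- `Q` is extremal for `(d, {1, 2, ..., k})`: it has degree `d`, is bounded in absolute
value by `1` at the integer points `1, ..., k`, and its leading coefficient is maximal among
all degree `d` polynomials bounded in absolute value by `1` at these points. -/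
def IsExtremalOnRange (d k : ℕ) (Q : Polynomial ℝ) : Prop :=
  Q.natDegree = d ∧ (∀ j : ℕ, 1 ≤ j → j ≤ k → |Q.eval (j : ℝ)| ≤ 1) ∧
    ∀ R : Polynomial ℝ, R.natDegree = d → (∀ j : ℕ, 1 ≤ j → j ≤ k → |R.eval (j : ℝ)| ≤ 1) →
      R.leadingCoeff ≤ Q.leadingCoeff

/-!
For a quadratic `Q = a t² + b t + c` and a node `p` with partner `q = k + 1 - p`,
`Q(1) + Q(k) - Q(p) - Q(q) = 2 a (p - 1)(k - p)`. Taking `p = ⌊(k + 1)/2⌋`, which maximises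
`(p - 1)(k - p) =: M` over the nodes, the bound `|Q| ≤ 1` on `{1, …, k}` gives `a M ≤ 2`, while
`1 - (2 / M)(t - 1)(k - t)` attains this bound. So an extremal `Q` has `a = 2 / M`, which forces
`Q(1) = Q(k) = 1`, and hence `Q(t) = (2 / M)(t - 1)(t - k) + 1`. Substituting
`t = ((k - 1)/2) x + (k + 1)/2` gives `(2 / M)((k - 1)/2)² (x² - 1) + 1`, where `M = ((k - 1)/2)²`
for odd `k` and `M = k (k - 2)/4` for even `k`.
-/

open Polynomial

namespace Polynomial

variable {R : Type*} [CommRing R] {Q : R[X]}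

lemma eval_eq_of_natDegree_le_two (hQ : Q.natDegree ≤ 2) (x : R) :
    Q.eval x = Q.coeff 2 * x ^ 2 + Q.coeff 1 * x + Q.coeff 0 := by
  rw [eval_eq_sum_range' (Nat.lt_succ_of_le hQ)]
  simp only [Finset.sum_range_succ, Finset.sum_range_zero]
  ring

lemma eval_add_eval_sub_eval_sub_eval (hQ : Q.natDegree ≤ 2) (s t u : R) :
    Q.eval s + Q.eval t - Q.eval u - Q.eval (s + t - u) =
      2 * Q.coeff 2 * ((u - s) * (t - u)) := by
  simp only [eval_eq_of_natDegree_le_two hQ]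
  ring

lemma eval_eq_of_eval_eq [IsDomain R] (hQ : Q.natDegree ≤ 2) {s t y : R} (hst : s ≠ t)
    (hs : Q.eval s = y) (ht : Q.eval t = y) (x : R) :
    Q.eval x = Q.coeff 2 * ((x - s) * (x - t)) + y := by
  rw [eval_eq_of_natDegree_le_two hQ] at hs ht ⊢
  have hb : Q.coeff 1 = -(Q.coeff 2 * (s + t)) :=
    mul_right_cancel₀ (sub_ne_zero.2 hst.symm) (by linear_combination ht - hs)
  linear_combination hs + (x - s) * hb

end Polynomial

noncomputable def maxNodeProduct (k : ℕ) : ℝ :=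
  ((((k + 1) / 2 : ℕ) : ℝ) - 1) * (k - ((k + 1) / 2 : ℕ))

lemma maxNodeProduct_pos {k : ℕ} (hk : 2 < k) : 0 < maxNodeProduct k := by
  have h1 : (2 : ℝ) ≤ ((k + 1) / 2 : ℕ) := by exact_mod_cast (show 2 ≤ (k + 1) / 2 by omega)
  have h2 : (((k + 1) / 2 : ℕ) : ℝ) + 1 ≤ k := by
    exact_mod_cast (show (k + 1) / 2 + 1 ≤ k by omega)
  unfold maxNodeProduct
  nlinarith

lemma sub_one_mul_sub_le_maxNodeProduct (k j : ℕ) :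
    ((j : ℝ) - 1) * (k - j) ≤ maxNodeProduct k := by
  set c := (k + 1) / 2 with hc
  have hlo : (k : ℝ) ≤ 2 * c := by exact_mod_cast (show k ≤ 2 * c by omega)
  have hhi : (2 * c : ℝ) ≤ k + 1 := by exact_mod_cast (show 2 * c ≤ k + 1 by omega)
  -- `M - (j - 1)(k - j) = (j - c)(j + c - k - 1)`, and both factors have the same sign
  have key : 0 ≤ ((j : ℝ) - c) * (j + c - k - 1) := by
    rcases le_or_gt j c with h | h
    · have hj : (j : ℝ) ≤ c := by exact_mod_cast h
      exact mul_nonneg_of_nonpos_of_nonpos (by linarith) (by linarith)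
    · have hj : (c : ℝ) + 1 ≤ j := by exact_mod_cast h
      exact mul_nonneg (by linarith) (by linarith)
  rw [maxNodeProduct, ← hc]
  linarith

lemma maxNodeProduct_of_odd {k : ℕ} (hk : Odd k) :
    maxNodeProduct k = (((k : ℝ) - 1) / 2) ^ 2 := by
  obtain ⟨m, rfl⟩ := hk
  rw [maxNodeProduct, show (2 * m + 1 + 1) / 2 = m + 1 by omega]
  push_cast
  ring

lemma maxNodeProduct_of_even {k : ℕ} (hk : Even k) : maxNodeProduct k = k * (k - 2) / 4 := by
  obtain ⟨m, rfl⟩ := hk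
  rw [maxNodeProduct, show (m + m + 1) / 2 = m by omega]
  push_cast
  ring

lemma two_mul_coeff_two_mul_maxNodeProduct_le {k : ℕ} (hk : 1 ≤ k) {Q : ℝ[X]}
    (hQ : Q.natDegree ≤ 2) (hbound : ∀ j : ℕ, 1 ≤ j → j ≤ k → |Q.eval (j : ℝ)| ≤ 1) :
    2 * (Q.coeff 2 * maxNodeProduct k) ≤ Q.eval 1 + Q.eval (k : ℝ) + 2 := by
  set c := (k + 1) / 2
  have hsecond : Q.eval 1 + Q.eval (k : ℝ) - Q.eval (c : ℝ) - Q.eval (1 + k - c : ℝ) =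
      2 * Q.coeff 2 * maxNodeProduct k :=
    eval_add_eval_sub_eval_sub_eval hQ 1 k c
  have hmid := (abs_le.mp (hbound c (by omega) (by omega))).1
  have hmid' := (abs_le.mp (hbound (k + 1 - c) (by omega) (by omega))).1
  rw [Nat.cast_sub (by omega)] at hmid'
  push_cast at hmid'
  rw [add_comm (k : ℝ) 1] at hmid'
  linarith

noncomputable def extremalQuadratic (k : ℕ) : ℝ[X] :=
  C (2 / maxNodeProduct k) * (X - 1) * (X - C (k : ℝ)) + 1

lemma eval_extremalQuadratic (k : ℕ) (t : ℝ) :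
    (extremalQuadratic k).eval t = 2 / maxNodeProduct k * ((t - 1) * (t - k)) + 1 := by
  simp only [extremalQuadratic, eval_add, eval_mul, eval_C, eval_sub, eval_X, eval_one]
  ring

lemma natDegree_extremalQuadratic {k : ℕ} (hk : 2 < k) :
    (extremalQuadratic k).natDegree = 2 := by
  have := (maxNodeProduct_pos hk).ne'
  unfold extremalQuadratic
  compute_degree!

lemma leadingCoeff_extremalQuadratic {k : ℕ} (hk : 2 < k) :
    (extremalQuadratic k).leadingCoeff = 2 / maxNodeProduct k := by
  rw [leadingCoeff, natDegree_extremalQuadratic hk, extremalQuadratic]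
  simp [mul_assoc, coeff_C_mul, coeff_one, sub_mul, mul_sub, coeff_X, ← pow_two]

lemma abs_eval_extremalQuadratic_le {k : ℕ} (hk : 2 < k) {j : ℕ} (hj1 : 1 ≤ j) (hjk : j ≤ k) :
    |(extremalQuadratic k).eval (j : ℝ)| ≤ 1 := by
  have hM := maxNodeProduct_pos hk
  have hw : 0 ≤ ((j : ℝ) - 1) * (k - j) := mul_nonneg (by simpa using hj1) (by simpa using hjk)
  have hA : 2 / maxNodeProduct k * (((j : ℝ) - 1) * (k - j)) ≤ 2 := by
    rw [div_mul_eq_mul_div, div_le_iff₀ hM]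
    linarith [sub_one_mul_sub_le_maxNodeProduct k j]
  have hA0 : 0 ≤ 2 / maxNodeProduct k * (((j : ℝ) - 1) * (k - j)) := by positivity
  rw [eval_extremalQuadratic, abs_le, show ((j : ℝ) - 1) * (j - k) = -((j - 1) * (k - j)) by ring]
  constructor <;> linarith

theorem IsExtremalOnRange.eq_extremalQuadratic {k : ℕ} (hk : 2 < k) {Q : ℝ[X]}
    (hQ : IsExtremalOnRange 2 k Q) : Q = extremalQuadratic k := by
  obtain ⟨hdeg, hbound, hmax⟩ := hQ
  have hM := maxNodeProduct_pos hk
  have hlower : 2 / maxNodeProduct k ≤ Q.coeff 2 := by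
    have := hmax _ (natDegree_extremalQuadratic hk) fun j => abs_eval_extremalQuadratic_le hk
    rwa [leadingCoeff_extremalQuadratic hk, leadingCoeff, hdeg] at this
  rw [div_le_iff₀ hM] at hlower
  have hupper := two_mul_coeff_two_mul_maxNodeProduct_le (by omega) hdeg.le hbound
  have h1 : Q.eval 1 ≤ 1 := by simpa using (abs_le.mp (hbound 1 le_rfl (by omega))).2
  have hk1 : Q.eval (k : ℝ) ≤ 1 := (abs_le.mp (hbound k (by omega) le_rfl)).2
  have ha : Q.coeff 2 = 2 / maxNodeProduct k := by rw [eq_div_iff hM.ne']; linarith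
  have hne : (1 : ℝ) ≠ k := by exact_mod_cast (show 1 ≠ k by omega)
  refine Polynomial.funext fun t => ?_
  rw [eval_eq_of_eval_eq hdeg.le hne (by linarith) (by linarith : Q.eval (k : ℝ) = 1) t,
    eval_extremalQuadratic, ha]

theorem stmt_18 (k : ℕ) (hk : 2 < k) (Q : Polynomial ℝ) (hQ : IsExtremalOnRange 2 k Q) :
    (Odd k → ∀ x : ℝ,
      Q.eval ((((k : ℝ) - 1) / 2) * x + ((k : ℝ) + 1) / 2) = 2 * x ^ 2 - 1) ∧
    (Even k → ∀ x : ℝ,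
      Q.eval ((((k : ℝ) - 1) / 2) * x + ((k : ℝ) + 1) / 2) =
        (2 * x ^ 2 - 1) + (2 / ((k : ℝ) * ((k : ℝ) - 2))) * (x ^ 2 - 1)) := by
  have hk' : (2 : ℝ) < k := by exact_mod_cast hk
  have hk0 : (k : ℝ) ≠ 0 := by positivity
  have hk1 : (k : ℝ) - 1 ≠ 0 := by linarith
  have hk2 : (k : ℝ) - 2 ≠ 0 := by linarith
  rw [hQ.eq_extremalQuadratic hk]
  refine ⟨fun hodd x => ?_, fun heven x => ?_⟩
  · rw [eval_extremalQuadratic, maxNodeProduct_of_odd hodd]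
    field_simp
    ring
  · rw [eval_extremalQuadratic, maxNodeProduct_of_even heven]
    field_simp
    ring
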